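/- arXiv:2411.12694 — 3 statements merged into one kernel-verified Lean document; each statement's English description precedes it below -/
import Mathlib

section
/- In any locally fair fractional orientation of a finite weighted graph G, the maximum out-degree max_v g(v) equals the maximum subgraph density ρ^max(G). -/
open Finset Real

noncomputable section

variable {V : Type*}

/-- The out-degree of `u` in a fractional orientation `o`. -/
def outdeg [Fintype V] (o : V → V → ℝ) (u : V) : ℝ := ∑ x : V, o u x

/-- `o` is a fractional orientation of the weighted graph `(G, w)`:
nonnegative values on directed edge-halves, supported on edges, summing to the edge weight. -/
def IsOrientation [Fintype V] (G : SimpleGraph V) (w : V → V → ℝ) (o : V → V → ℝ) : Prop :=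
  (∀ u v, 0 ≤ o u v) ∧ (∀ u v, ¬ G.Adj u v → o u v = 0) ∧
    (∀ u v, G.Adj u v → o u v + o v u = w u v)

/-- A fractional orientation is locally fair if positive weight on `u → v`
implies `g(u) ≤ g(v)`. -/
def LocallyFair [Fintype V] (o : V → V → ℝ) : Prop :=
  ∀ u v, 0 < o u v → outdeg o u ≤ outdeg o v

/-- A fractional orientation is `η`-fair if positive weight on `u → v`
implies `g(u) ≤ (1+η)·g(v)`. -/
def EtaFair [Fintype V] (η : ℝ) (o : V → V → ℝ) : Prop :=
  ∀ u v, 0 < o u v → outdeg o u ≤ (1 + η) * outdeg o v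

/-- Total weight of edges of `G` inside the vertex set `S`. -/
def edgeWeight [Fintype V] (G : SimpleGraph V) [DecidableRel G.Adj] (w : V → V → ℝ)
    (S : Finset V) : ℝ :=
  (∑ u ∈ S, ∑ v ∈ S, if G.Adj u v then w u v else 0) / 2

/-- Density of the subgraph induced on `S`. -/
def densityOn [Fintype V] (G : SimpleGraph V) [DecidableRel G.Adj] (w : V → V → ℝ)
    (S : Finset V) : ℝ :=
  edgeWeight G w S / S.card

/-!
Counting every arc inside `S` once from its tail, the weight of `S` is the sum over `u ∈ S` of the
part of `g(u)` that stays in `S`, so every density is at most `max g`. Conversely, local fairness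
forbids arcs leaving the set of vertices of maximum out-degree, so on that set the whole
out-degree stays inside and its density is exactly `max g`.
-/

section

variable [Fintype V] {G : SimpleGraph V} [DecidableRel G.Adj] {w o : V → V → ℝ}

theorem IsOrientation.edgeWeight_eq (ho : IsOrientation G w o) (S : Finset V) :
    edgeWeight G w S = ∑ u ∈ S, ∑ v ∈ S, o u v := by
  have h_adj : ∀ u v, (if G.Adj u v then w u v else 0) = o u v + o v u := fun u v => by
    split_ifs with h
    · exact (ho.2.2 u v h).symm
    · rw [ho.2.1 u v h, ho.2.1 v u (fun h' => h h'.symm), add_zero]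
  simp only [edgeWeight, h_adj, sum_add_distrib]
  rw [sum_comm (f := fun u v => o v u)]
  ring

theorem IsOrientation.densityOn_eq (ho : IsOrientation G w o) (S : Finset V) :
    densityOn G w S = (∑ u ∈ S, ∑ v ∈ S, o u v) / S.card := by
  rw [densityOn, ho.edgeWeight_eq]

theorem IsOrientation.densityOn_le {S : Finset V} {M : ℝ} (ho : IsOrientation G w o)
    (hS : S.Nonempty) (hM : ∀ u ∈ S, outdeg o u ≤ M) : densityOn G w S ≤ M := by
  have h_inner : ∀ u ∈ S, ∑ v ∈ S, o u v ≤ M := fun u hu =>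
    (sum_le_univ_sum_of_nonneg (ho.1 u)).trans (hM u hu)
  rw [ho.densityOn_eq, div_le_iff₀ (by exact_mod_cast hS.card_pos)]
  calc ∑ u ∈ S, ∑ v ∈ S, o u v ≤ ∑ _u ∈ S, M := sum_le_sum h_inner
    _ = M * S.card := by rw [sum_const, nsmul_eq_mul, mul_comm]

theorem LocallyFair.nonpos_of_outdeg_lt {u v : V}
    (hf : LocallyFair o) (h : outdeg o v < outdeg o u) : o u v ≤ 0 :=
  not_lt.mp fun hpos => (hf u v hpos).not_gt h

theorem LocallyFair.sum_superlevel_eq_outdeg [DecidableEq V] {t : ℝ} {u : V}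
    (hf : LocallyFair o) (hnonneg : ∀ u v, 0 ≤ o u v) (hu : t ≤ outdeg o u) :
    ∑ v ∈ univ.filter (t ≤ outdeg o ·), o u v = outdeg o u := by
  refine sum_subset (subset_univ _) fun v _ hv => ?_
  have hlt : outdeg o v < t := by simpa using hv
  exact le_antisymm (hf.nonpos_of_outdeg_lt (hlt.trans_le hu)) (hnonneg u v)

theorem isGreatest_densityOn_max_outdeg {v₀ : V} (ho : IsOrientation G w o)
    (hf : LocallyFair o) (hmax : ∀ u, outdeg o u ≤ outdeg o v₀) :
    IsGreatest {ρ : ℝ | ∃ S : Finset V, S.Nonempty ∧ ρ = densityOn G w S}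
      (outdeg o v₀) := by
  classical
  set M := outdeg o v₀
  set S := univ.filter (M ≤ outdeg o ·)
  have hS : S.Nonempty := ⟨v₀, by simp [S, M]⟩
  have h_inner : ∀ u ∈ S, ∑ v ∈ S, o u v = M := fun u hu => by
    have hMu : M ≤ outdeg o u := (mem_filter.mp hu).2
    rw [hf.sum_superlevel_eq_outdeg ho.1 hMu]
    exact le_antisymm (hmax u) hMu
  refine ⟨⟨S, hS, ?_⟩, ?_⟩
  · have hcard : (S.card : ℝ) ≠ 0 := by exact_mod_cast hS.card_pos.ne'
    rw [ho.densityOn_eq, sum_congr rfl h_inner, sum_const, nsmul_eq_mul,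
      mul_div_cancel_left₀ _ hcard]
  · rintro _ ⟨T, hT, rfl⟩
    exact ho.densityOn_le hT fun u _ => hmax u

end

theorem locally_fair_max_outdeg_eq_max_density_general [Fintype V] [Nonempty V]
    (G : SimpleGraph V) [DecidableRel G.Adj] (w : V → V → ℝ)
    (o : V → V → ℝ) (ho : IsOrientation G w o) (hf : LocallyFair o) :
    (⨆ v : V, outdeg o v) =
      sSup {ρ : ℝ | ∃ S : Finset V, S.Nonempty ∧ ρ = densityOn G w S} := by
  obtain ⟨v₀, hv₀⟩ := exists_eq_ciSup_of_finite (f := outdeg o)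
  have hmax : ∀ u, outdeg o u ≤ outdeg o v₀ :=
    hv₀ ▸ le_ciSup (Set.finite_range (outdeg o)).bddAbove
  rw [← hv₀, (isGreatest_densityOn_max_outdeg ho hf hmax).csSup_eq]

/-- in any locally fair fractional orientation, the maximum out-degree
equals the maximum subgraph density. -/
theorem locally_fair_max_outdeg_eq_max_density [Fintype V] [Nonempty V]
    (G : SimpleGraph V) [DecidableRel G.Adj] (w : V → V → ℝ)
    (hwpos : ∀ u v, G.Adj u v → 0 < w u v) (hwsymm : ∀ u v, w u v = w v u)
    (o : V → V → ℝ) (ho : IsOrientation G w o) (hf : LocallyFair o) :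
    (⨆ v : V, outdeg o v) =
      sSup {ρ : ℝ | ∃ S : Finset V, S.Nonempty ∧ ρ = densityOn G w S} :=
  locally_fair_max_outdeg_eq_max_density_general G w o ho hf
end
end

section
/- Let G be a finite weighted graph on n vertices in which every out-degree in any fractional orientation is at most n, and let g be an η-fair fractional orientation with η ≤ ε²/(128 log n) for some 0 < ε ≤ 1. Then for every vertex v, the out-degree satisfies (1+ε)^{-1} g*(v) ≤ g(v) ≤ (1+ε) g*(v), where g*(v) is the out-degree of v in any locally fair fractional orientation of G. -/
open Finset Real

noncomputable section

variable {V : Type*}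

/-!
Suppose `g(v) > (1 + ε) g*(v)` and grow the level sets
`A_j = {u | g*(u) ≤ g*(v), g(v) ≤ (1 + η)^j g(u)}` around `v`. Both orientations split the same
edge weights, so the excess `∑_{u ∈ A_j} (g(u) - g*(u))` leaves `A_j` only along edges `u → x`
used by `g` whose reverse `x → u` is used by `g*`; η-fairness and local fairness put such `x`
into `A_{j+1}`, so the excess is at most `g*(v) |A_{j+1} \ A_j|`. As long as `(1 + η)^j` stays
below `(1 + ε)/(1 + ε/2)`, each vertex of `A_j` carries excess at least `(ε/2) g*(v)`, whence
`|A_{j+1}| ≥ (1 + ε/2) |A_j|`. The bound on `η` leaves room for `K ≈ 3 log n / ε` such steps,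
and `(1 + ε/2)^K > n` is a contradiction. The lower bound is the same argument with the roles of
`g` and `g*` exchanged, so the level sets are set up for an `α`-fair `p` and a `β`-fair `q`.
-/

lemma div_three_le_log_one_add_half {ε : ℝ} (hε : 0 ≤ ε) (hε1 : ε ≤ 1) :
    ε / 3 ≤ log (1 + ε / 2) := by
  have hlog := one_sub_inv_le_log_of_pos (show 0 < 1 + ε / 2 by positivity)
  have hinv : 1 - (1 + ε / 2)⁻¹ = ε / (2 + ε) := by field_simp; ring
  have hfrac : ε / 3 ≤ ε / (2 + ε) := div_le_div_of_nonneg_left hε (by positivity) (by linarith)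
  linarith

lemma natCast_lt_one_add_half_pow {ε : ℝ} (hε : 0 < ε) (hε1 : ε ≤ 1) (n K : ℕ)
    (hK : 3 * log n / ε < K) : (n : ℝ) < (1 + ε / 2) ^ K := by
  rcases n.eq_zero_or_pos with rfl | hn
  · simp only [CharP.cast_eq_zero]; positivity
  rw [lt_pow_iff_log_lt (by exact_mod_cast hn) (by positivity)]
  calc log n < K * (ε / 3) := by rw [div_lt_iff₀ hε] at hK; linarith
    _ ≤ K * log (1 + ε / 2) := by
      gcongr; exact div_three_le_log_one_add_half hε.le hε1

lemma one_add_half_mul_one_add_pow_le {ε η : ℝ} (hε : 0 ≤ ε) (hε1 : ε ≤ 1) (hη : 0 ≤ η) {K : ℕ}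
    (hK : K * η ≤ ε / 4) : (1 + ε / 2) * (1 + η) ^ K ≤ 1 + ε := by
  have hexp : (1 + η) ^ K ≤ exp (ε / 4) :=
    calc (1 + η) ^ K ≤ exp η ^ K := by
          gcongr; linarith [add_one_le_exp η]
      _ = exp (K * η) := (exp_nat_mul η K).symm
      _ ≤ exp (ε / 4) := exp_le_exp.mpr hK
  have hinv : exp (ε / 4) * (1 - ε / 4) ≤ 1 := by
    calc exp (ε / 4) * (1 - ε / 4) ≤ exp (ε / 4) * exp (-(ε / 4)) := by
          gcongr; linarith [add_one_le_exp (-(ε / 4))]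
      _ = 1 := by rw [← exp_add, add_neg_cancel, exp_zero]
  calc (1 + ε / 2) * (1 + η) ^ K ≤ (1 + ε) * (1 - ε / 4) * exp (ε / 4) :=
        mul_le_mul (by nlinarith) hexp (by positivity) (by nlinarith)
    _ ≤ 1 + ε := by nlinarith

lemma floor_add_one_mul_le {ε η : ℝ} (hε : 0 < ε) (hε1 : ε ≤ 1) (hη0 : 0 ≤ η) (n : ℕ)
    (hη : η ≤ ε ^ 2 / (128 * log n)) :
    ((⌊3 * log n / ε⌋₊ + 1 : ℕ) : ℝ) * η ≤ ε / 4 := by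
  rcases eq_or_ne (log n) 0 with hL | hL
  · rw [hL, mul_zero, div_zero] at hη
    rw [le_antisymm hη hη0, mul_zero]; positivity
  have hn : 2 ≤ n := by
    by_contra! h
    interval_cases n <;> simp at hL
  have hL2 : 1 / 2 < log n :=
    lt_of_lt_of_le (by linarith [log_two_gt_d9]) (log_le_log two_pos (by exact_mod_cast hn))
  have hLη : 128 * log n * η ≤ ε ^ 2 := by
    rwa [le_div_iff₀ (by positivity), mul_comm] at hη
  have hfloor : ((⌊3 * log n / ε⌋₊ : ℕ) : ℝ) * ε ≤ 3 * log n := by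
    have := Nat.floor_le (show 0 ≤ 3 * log n / ε by positivity)
    rwa [le_div_iff₀ hε] at this
  push_cast
  nlinarith

lemma exists_natCast_lt_pow_and_pow_le {ε η : ℝ} (hε : 0 < ε) (hε1 : ε ≤ 1) (hη0 : 0 ≤ η)
    (n : ℕ) (hη : η ≤ ε ^ 2 / (128 * log n)) :
    ∃ K : ℕ, (n : ℝ) < (1 + ε / 2) ^ K ∧ (1 + ε / 2) * (1 + η) ^ K ≤ 1 + ε :=
  ⟨_, natCast_lt_one_add_half_pow hε hε1 n _ (by exact_mod_cast Nat.lt_floor_add_one _),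
    one_add_half_mul_one_add_pow_le hε.le hε1 hη0 (floor_add_one_mul_le hε hε1 hη0 n hη)⟩

lemma pow_le_of_mul_le_succ {c : ℝ} (hc : 0 ≤ c) {a : ℕ → ℝ} {K : ℕ} (h0 : 1 ≤ a 0)
    (hstep : ∀ j < K, c * a j ≤ a (j + 1)) : c ^ K ≤ a K := by
  induction K with
  | zero => simpa using h0
  | succ K ih =>
    calc c ^ (K + 1) = c * c ^ K := pow_succ' c K
      _ ≤ c * a K := by gcongr; exact ih fun j hj => hstep j (by omega)
      _ ≤ a (K + 1) := hstep K (by omega)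

lemma mul_pow_succ_lt_div_pow_sub_mul_pow {α β δ r s : ℝ} (hα : 0 ≤ α) (hβ : 0 ≤ β)
    (hδ : 0 ≤ δ) (hr : 0 ≤ r) {j K : ℕ} (hj : j < K)
    (hgap : (1 + δ) * ((1 + α) * (1 + β)) ^ K * r < s) :
    δ * (r * (1 + β) ^ (j + 1)) < s / (1 + α) ^ j - r * (1 + β) ^ j := by
  have hθ : 1 ≤ (1 + α) * (1 + β) := by nlinarith
  have hle : ∀ i ≤ K, (1 + α) ^ j * (1 + β) ^ i ≤ ((1 + α) * (1 + β)) ^ K := fun i hi =>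
    calc (1 + α) ^ j * (1 + β) ^ i ≤ (1 + α) ^ K * (1 + β) ^ K := by
          gcongr <;> linarith
      _ = ((1 + α) * (1 + β)) ^ K := (mul_pow _ _ _).symm
  have h1 := hle j hj.le
  have h2 := hle (j + 1) hj
  rw [lt_sub_iff_add_lt, lt_div_iff₀ (by positivity)]
  nlinarith [mul_le_mul_of_nonneg_left h1 hr, mul_le_mul_of_nonneg_left h2 (mul_nonneg hδ hr)]

section Orientation

variable [Fintype V] {G : SimpleGraph V} {w : V → V → ℝ} {p q : V → V → ℝ}

lemma IsOrientation.outdeg_nonneg (hp : IsOrientation G w p) (u : V) : 0 ≤ outdeg p u :=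
  sum_nonneg fun x _ => hp.1 u x

lemma IsOrientation.sub_eq_sub (hp : IsOrientation G w p) (hq : IsOrientation G w q) (u x : V) :
    p u x - q u x = q x u - p x u := by
  by_cases h : G.Adj u x
  · linarith [hp.2.2 u x h, hq.2.2 u x h]
  · have h' : ¬ G.Adj x u := fun h' => h h'.symm
    rw [hp.2.1 u x h, hq.2.1 u x h, hp.2.1 x u h', hq.2.1 x u h']

lemma EtaFair.mono {η η' : ℝ} (hp : IsOrientation G w p) (h : EtaFair η p) (hη : η ≤ η') :
    EtaFair η' p := fun u v huv =>
  (h u v huv).trans (mul_le_mul_of_nonneg_right (by linarith) (hp.outdeg_nonneg v))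

lemma LocallyFair.etaFair_zero (h : LocallyFair p) : EtaFair 0 p := fun u v huv => by
  simpa using h u v huv

section

variable [DecidableEq V]

lemma IsOrientation.sum_outdeg_sub_eq (hp : IsOrientation G w p) (hq : IsOrientation G w q)
    (A : Finset V) :
    ∑ u ∈ A, (outdeg p u - outdeg q u) = ∑ u ∈ A, ∑ x ∈ Aᶜ, (p u x - q u x) := by
  have hinner : ∑ u ∈ A, ∑ x ∈ A, (p u x - q u x) = 0 := by
    have hanti : ∑ u ∈ A, ∑ x ∈ A, (p u x - q u x) = ∑ u ∈ A, ∑ x ∈ A, (q u x - p u x) := by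
      rw [sum_comm]
      exact sum_congr rfl fun u _ => sum_congr rfl fun x _ => hp.sub_eq_sub hq x u
    simp only [← neg_sub (p _ _), sum_neg_distrib] at hanti
    linarith
  simp only [outdeg, ← sum_sub_distrib]
  rw [← add_zero (∑ u ∈ A, ∑ x ∈ Aᶜ, _), ← hinner, ← sum_add_distrib]
  exact sum_congr rfl fun u _ => (sum_compl_add_sum A _).symm

lemma IsOrientation.sum_outdeg_sub_le (hp : IsOrientation G w p) (hq : IsOrientation G w q)
    {A B : Finset V} (hclosed : ∀ u ∈ A, ∀ x ∉ A, 0 < p u x → 0 < q x u → x ∈ B) :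
    ∑ u ∈ A, (outdeg p u - outdeg q u) ≤ ∑ x ∈ B \ A, outdeg q x := by
  have hnonpos : ∀ u ∈ A, ∀ x ∈ Aᶜ, x ∉ B \ A → p u x - q u x ≤ 0 := by
    intro u hu x hxA hxB
    by_contra! hpos
    have hx : x ∉ A := mem_compl.mp hxA
    refine hxB (mem_sdiff.mpr ⟨hclosed u hu x hx ?_ ?_, hx⟩)
    · linarith [hq.1 u x]
    · linarith [hp.sub_eq_sub hq u x, hp.1 x u]
  rw [hp.sum_outdeg_sub_eq hq]
  calc ∑ u ∈ A, ∑ x ∈ Aᶜ, (p u x - q u x) ≤ ∑ u ∈ A, ∑ x ∈ B \ A, (p u x - q u x) :=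
        sum_le_sum fun u hu => sum_le_sum_of_subset_of_nonpos'
          (fun x hx => mem_compl.mpr (mem_sdiff.mp hx).2) (hnonpos u hu)
    _ ≤ ∑ u ∈ A, ∑ x ∈ B \ A, q x u := by
        gcongr with u _ x _
        linarith [hp.sub_eq_sub hq u x, hp.1 x u]
    _ = ∑ x ∈ B \ A, ∑ u ∈ A, q x u := sum_comm
    _ ≤ ∑ x ∈ B \ A, outdeg q x := by
        gcongr with x _
        exact sum_le_univ_sum_of_nonneg (hq.1 x)

lemma IsOrientation.one_add_mul_card_le (hp : IsOrientation G w p) (hq : IsOrientation G w q)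
    {A B : Finset V} (hAB : A ⊆ B) (hclosed : ∀ u ∈ A, ∀ x ∉ A, 0 < p u x → 0 < q x u → x ∈ B)
    {a b δ : ℝ} (ha : 0 < a) (hδ : δ * b ≤ a) (hA : ∀ u ∈ A, a ≤ outdeg p u - outdeg q u)
    (hB : ∀ x ∈ B \ A, outdeg q x ≤ b) : (1 + δ) * #A ≤ #B := by
  have hcard : (#A : ℝ) ≤ #B := by exact_mod_cast card_le_card hAB
  have hflow : #A * a ≤ (#B - #A) * b :=
    calc #A * a = ∑ _ ∈ A, a := by rw [sum_const, nsmul_eq_mul]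
      _ ≤ ∑ u ∈ A, (outdeg p u - outdeg q u) := sum_le_sum hA
      _ ≤ ∑ x ∈ B \ A, outdeg q x := hp.sum_outdeg_sub_le hq hclosed
      _ ≤ ∑ _ ∈ B \ A, b := sum_le_sum hB
      _ = (#B - #A) * b := by
        rw [sum_const, card_sdiff_of_subset hAB, nsmul_eq_mul, Nat.cast_sub (card_le_card hAB)]
  rcases le_or_gt b 0 with hb | hb
  · have hA0 : (#A : ℝ) = 0 := by nlinarith
    rw [hA0, mul_zero]
    positivity
  · have : δ * #A * b ≤ (#B - #A) * b := by nlinarith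
    linarith [le_of_mul_le_mul_right this hb]

end

def levelSet (p q : V → V → ℝ) (α β : ℝ) (v : V) (j : ℕ) : Finset V :=
  {u | outdeg q u ≤ outdeg q v * (1 + β) ^ j ∧ outdeg p v ≤ outdeg p u * (1 + α) ^ j}

variable {α β : ℝ} {v : V}

@[simp]
lemma mem_levelSet {u : V} {j : ℕ} : u ∈ levelSet p q α β v j ↔
    outdeg q u ≤ outdeg q v * (1 + β) ^ j ∧ outdeg p v ≤ outdeg p u * (1 + α) ^ j := by
  simp [levelSet]

lemma levelSet_subset_succ (hp : IsOrientation G w p) (hq : IsOrientation G w q) (hα : 0 ≤ α)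
    (hβ : 0 ≤ β) (j : ℕ) : levelSet p q α β v j ⊆ levelSet p q α β v (j + 1) := by
  intro u hu
  rw [mem_levelSet] at hu ⊢
  have hαj : (1 + α) ^ j ≤ (1 + α) ^ (j + 1) := pow_le_pow_right₀ (by linarith) j.le_succ
  have hβj : (1 + β) ^ j ≤ (1 + β) ^ (j + 1) := pow_le_pow_right₀ (by linarith) j.le_succ
  exact ⟨hu.1.trans (mul_le_mul_of_nonneg_left hβj (hq.outdeg_nonneg v)),
    hu.2.trans (mul_le_mul_of_nonneg_left hαj (hp.outdeg_nonneg u))⟩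

lemma levelSet_closed (hpf : EtaFair α p) (hqf : EtaFair β q) (hα : 0 ≤ α) (hβ : 0 ≤ β)
    {j : ℕ} {u x : V} (hu : u ∈ levelSet p q α β v j) (hux : 0 < p u x) (hxu : 0 < q x u) :
    x ∈ levelSet p q α β v (j + 1) := by
  rw [mem_levelSet] at hu ⊢
  constructor
  · calc outdeg q x ≤ (1 + β) * outdeg q u := hqf x u hxu
      _ ≤ (1 + β) * (outdeg q v * (1 + β) ^ j) := by gcongr; exact hu.1
      _ = outdeg q v * (1 + β) ^ (j + 1) := by ring
  · calc outdeg p v ≤ outdeg p u * (1 + α) ^ j := hu.2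
      _ ≤ (1 + α) * outdeg p x * (1 + α) ^ j := by gcongr; exact hpf u x hux
      _ = outdeg p x * (1 + α) ^ (j + 1) := by ring

theorem IsOrientation.one_add_pow_le_card (hp : IsOrientation G w p) (hq : IsOrientation G w q)
    (hpf : EtaFair α p) (hqf : EtaFair β q) (hα : 0 ≤ α) (hβ : 0 ≤ β) {δ : ℝ} (hδ : 0 ≤ δ)
    {K : ℕ} (hgap : (1 + δ) * ((1 + α) * (1 + β)) ^ K * outdeg q v < outdeg p v) :
    (1 + δ) ^ K ≤ Fintype.card V := by
  classical
  set L := levelSet p q α β v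
  have hstep : ∀ j < K, (1 + δ) * #(L j) ≤ #(L (j + 1)) := fun j hj => by
    have hqv := hq.outdeg_nonneg v
    have hgap_j := mul_pow_succ_lt_div_pow_sub_mul_pow hα hβ hδ hqv hj hgap
    refine hp.one_add_mul_card_le hq (levelSet_subset_succ hp hq hα hβ j)
      (fun u hu x _ => levelSet_closed hpf hqf hα hβ hu)
      (lt_of_le_of_lt (mul_nonneg hδ (mul_nonneg hqv (by positivity))) hgap_j)
      hgap_j.le (fun u hu => ?_) (fun x hx => (mem_levelSet.mp (mem_sdiff.mp hx).1).1)
    obtain ⟨hqu, hpu⟩ := mem_levelSet.mp hu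
    linarith [(div_le_iff₀ (by positivity : (0 : ℝ) < (1 + α) ^ j)).mpr hpu]
  have hL0 : (1 : ℝ) ≤ #(L 0) := by
    exact_mod_cast card_pos.mpr ⟨v, mem_levelSet.mpr (by simp)⟩
  calc (1 + δ) ^ K ≤ #(L K) := pow_le_of_mul_le_succ (by positivity) hL0 hstep
    _ ≤ Fintype.card V := by exact_mod_cast card_le_univ _

end Orientation

theorem eta_fair_approximates_local_outdeg_general [Fintype V]
    (G : SimpleGraph V) (w : V → V → ℝ)
    (n : ℕ) (hn : Fintype.card V = n)
    (ε η : ℝ) (hε : 0 < ε) (hε1 : ε ≤ 1) (hη : η ≤ ε ^ 2 / (128 * Real.log n))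
    (ostar : V → V → ℝ) (hostar : IsOrientation G w ostar) (hfair : LocallyFair ostar)
    (o : V → V → ℝ) (ho : IsOrientation G w o) (hetafair : EtaFair η o) :
    ∀ v : V, (1 + ε)⁻¹ * outdeg ostar v ≤ outdeg o v ∧
      outdeg o v ≤ (1 + ε) * outdeg ostar v := by
  intro v
  set η' := max η 0
  have hη' : 0 ≤ η' := le_max_right η 0
  have ho' : EtaFair η' o := hetafair.mono ho (le_max_left η 0)
  have hostar' : EtaFair 0 ostar := hfair.etaFair_zero
  obtain ⟨K, hKn, hKη⟩ := exists_natCast_lt_pow_and_pow_le hε hε1 hη' n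
    (max_le hη (div_nonneg (sq_nonneg ε) (mul_nonneg (by norm_num) (log_natCast_nonneg n))))
  rw [← hn] at hKn
  have hgap : ∀ {r s : ℝ}, 0 ≤ r → (1 + ε) * r < s → (1 + ε / 2) * (1 + η') ^ K * r < s :=
    fun hr hrs => (mul_le_mul_of_nonneg_right hKη hr).trans_lt hrs
  constructor
  · by_contra! h
    have hK := hostar.one_add_pow_le_card ho hostar' ho' le_rfl hη' (half_pos hε).le
      (by simpa using hgap (ho.outdeg_nonneg v) ((lt_inv_mul_iff₀ (by positivity)).mp h))
    linarith
  · by_contra! h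
    have hK := ho.one_add_pow_le_card hostar ho' hostar' hη' le_rfl (half_pos hε).le
      (by simpa using hgap (hostar.outdeg_nonneg v) h)
    linarith

/-- in an `η`-fair fractional orientation with `η ≤ ε²/(128 log n)`,
every out-degree is a `(1+ε)`-approximation of the local out-degree `g*(v)`
(the out-degree in any locally fair orientation). -/
theorem eta_fair_approximates_local_outdeg [Fintype V]
    (G : SimpleGraph V) (w : V → V → ℝ)
    (hwpos : ∀ u v, G.Adj u v → 0 < w u v) (hwsymm : ∀ u v, w u v = w v u)
    (n : ℕ) (hn : Fintype.card V = n)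
    (hbound : ∀ o' : V → V → ℝ, IsOrientation G w o' → ∀ u, outdeg o' u ≤ n)
    (ε η : ℝ) (hε : 0 < ε) (hε1 : ε ≤ 1) (hη : η ≤ ε ^ 2 / (128 * Real.log n))
    (ostar : V → V → ℝ) (hostar : IsOrientation G w ostar) (hfair : LocallyFair ostar)
    (o : V → V → ℝ) (ho : IsOrientation G w o) (hetafair : EtaFair η o) :
    ∀ v : V, (1 + ε)⁻¹ * outdeg ostar v ≤ outdeg o v ∧
      outdeg o v ≤ (1 + ε) * outdeg ostar v :=
  eta_fair_approximates_local_outdeg_general G w n hn ε η hε hε1 hη ostar hostar hfair o ho hetafair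
end
end

section
/- Let 0 < ε ≤ 1 and n ≥ 2. For a finite unit-weight graph G on n vertices, any vertex v, and k = Θ(ε^{−2} log² n) sufficiently large, the local density ρ*_k(v) of v within its k-hop neighbourhood H_k(v) satisfies (1+ε)^{−1} ρ*(v) ≤ ρ*_k(v) ≤ (1+ε) ρ*(v). -/
open Finset Real

noncomputable section

variable {V : Type*}

/-- A unit-weight fractional orientation of the subgraph of `G` induced on `s`,
encoded on the ambient vertex set. -/
def OrientationOn [Fintype V] (G : SimpleGraph V) (s : Finset V) (o : V → V → ℝ) : Prop :=
  (∀ u v, 0 ≤ o u v) ∧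
    (∀ u v, ¬ (G.Adj u v ∧ u ∈ s ∧ v ∈ s) → o u v = 0) ∧
    (∀ u v, G.Adj u v → u ∈ s → v ∈ s → o u v + o v u = 1)

open Classical in
/-- The `k`-hop neighbourhood of `v`. -/
noncomputable def hopBall [Fintype V] (G : SimpleGraph V) (v : V) (k : ℕ) : Finset V :=
  Finset.univ.filter fun u => G.Reachable v u ∧ G.dist v u ≤ k

/-!
Compare a locally fair orientation `a` of a smaller induced subgraph with one, `b`, of a larger
one through the surplus `outdeg a - outdeg b`: summed over a vertex set `S` it is at most the net
weight of the arcs leaving `S`. For `ρ*_k(v) ≤ ρ*(v)`, fairness forbids any such outflow from the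
set where the surplus is maximal. For `ρ*(v) ≤ (1 + ε) ρ*_k(v)`, grow a set from `v` along arcs
on which `b` exceeds `a`; fairness keeps `a ≤ a(v)` and `b ≥ b(v)` on it, so a deficit of more
than `ε a(v)` per vertex must flow into new vertices, each absorbing at most `a(v)`. While the set
stays inside `H_k(v)` it therefore grows by a factor `1 + ε` per step, and after
`k ≥ 4 ε⁻² log² n` steps it would have more than `n` vertices.
-/

lemma outdeg_nonneg [Fintype V] {o : V → V → ℝ} (h : ∀ u w, 0 ≤ o u w) (u : V) :
    0 ≤ outdeg o u :=
  sum_nonneg fun _ _ => h _ _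

lemma IsOrientation.orientationOn_univ [Fintype V] {G : SimpleGraph V} {o : V → V → ℝ}
    (ho : IsOrientation G (fun _ _ => 1) o) : OrientationOn G univ o :=
  ⟨ho.1, fun u w h => ho.2.1 u w fun hadj => h ⟨hadj, mem_univ _, mem_univ _⟩,
    fun u w hadj _ _ => ho.2.2 u w hadj⟩

namespace OrientationOn

variable [Fintype V] {G : SimpleGraph V} {s t : Finset V} {a b : V → V → ℝ}

open Classical in
lemma add_swap_eq (ha : OrientationOn G s a) (u w : V) :
    a u w + a w u = if G.Adj u w ∧ u ∈ s ∧ w ∈ s then 1 else 0 := by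
  split_ifs with h
  · exact ha.2.2 u w h.1 h.2.1 h.2.2
  · have h' : ¬ (G.Adj w u ∧ w ∈ s ∧ u ∈ s) := fun h' => h ⟨h'.1.symm, h'.2.2, h'.2.1⟩
    rw [ha.2.1 u w h, ha.2.1 w u h', add_zero]

lemma add_swap_le (ha : OrientationOn G s a) (hb : OrientationOn G t b) (hst : s ⊆ t)
    (u w : V) : a u w + a w u ≤ b u w + b w u := by
  rw [ha.add_swap_eq, hb.add_swap_eq]
  split_ifs with h₁ h₂ h₂
  · rfl
  · exact absurd ⟨h₁.1, hst h₁.2.1, hst h₁.2.2⟩ h₂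
  · exact zero_le_one
  · rfl

lemma add_swap_eq_of_mem (ha : OrientationOn G s a) (hb : OrientationOn G t b) (hst : s ⊆ t)
    {u w : V} (hu : u ∈ s) (hw : w ∈ s) : a u w + a w u = b u w + b w u := by
  rw [ha.add_swap_eq, hb.add_swap_eq]
  split_ifs with h₁ h₂ h₂
  · rfl
  · exact absurd ⟨h₁.1, hst hu, hst hw⟩ h₂
  · exact absurd ⟨h₂.1, hu, hw⟩ h₁
  · rfl

lemma adj_of_pos (ha : OrientationOn G s a) {u w : V} (h : 0 < a u w) : G.Adj u w :=
  (not_not.1 fun hc => h.ne' (ha.2.1 u w hc)).1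

end OrientationOn

/-- The reverse arc `w → u` then carries more of `y` than of `x`. -/
lemma LocallyFair.outdeg_le_of_lt_of_add_swap_le [Fintype V] {x y : V → V → ℝ}
    (hxf : LocallyFair x) (hyf : LocallyFair y) (hx : ∀ u w, 0 ≤ x u w)
    (hy : ∀ u w, 0 ≤ y u w) {u w : V} (hpair : x u w + x w u ≤ y u w + y w u)
    (hlt : y u w < x u w) : outdeg x u ≤ outdeg x w ∧ outdeg y w ≤ outdeg y u :=
  ⟨hxf u w ((hy u w).trans_lt hlt), hyf w u (by linarith [hx w u])⟩

/-- Each edge `uw` inside `S` contributes `a u w + a w u - (b u w + b w u) ≤ 0`. -/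
lemma sum_outdeg_sub_le_sum_compl [Fintype V] [DecidableEq V] (a b : V → V → ℝ)
    (S : Finset V) (hpair : ∀ u ∈ S, ∀ w ∈ S, a u w + a w u ≤ b u w + b w u) :
    ∑ u ∈ S, (outdeg a u - outdeg b u) ≤ ∑ u ∈ S, ∑ w ∈ Sᶜ, (a u w - b u w) := by
  have hsplit : ∑ u ∈ S, (outdeg a u - outdeg b u) =
      ∑ u ∈ S, ∑ w ∈ S, (a u w - b u w) + ∑ u ∈ S, ∑ w ∈ Sᶜ, (a u w - b u w) := by
    rw [← sum_add_distrib]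
    refine sum_congr rfl fun u _ => ?_
    rw [sum_add_sum_compl, sum_sub_distrib]
    rfl
  have hinner : ∑ u ∈ S, ∑ w ∈ S, (a u w - b u w) ≤ 0 := by
    have hsymm : 2 * ∑ u ∈ S, ∑ w ∈ S, (a u w - b u w) =
        ∑ u ∈ S, ∑ w ∈ S, ((a u w + a w u) - (b u w + b w u)) := by
      rw [two_mul]
      nth_rewrite 2 [sum_comm]
      simp only [← sum_add_distrib]
      exact sum_congr rfl fun _ _ => sum_congr rfl fun _ _ => by ring
    have : ∑ u ∈ S, ∑ w ∈ S, ((a u w + a w u) - (b u w + b w u)) ≤ 0 :=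
      sum_nonpos fun u hu => sum_nonpos fun w hw => sub_nonpos.2 (hpair u hu w hw)
    linarith
  linarith

theorem LocallyFair.outdeg_le_of_subset [Fintype V] {G : SimpleGraph V} {s t : Finset V}
    {a b : V → V → ℝ} (haf : LocallyFair a) (hbf : LocallyFair b) (ha : OrientationOn G s a)
    (hb : OrientationOn G t b) (hst : s ⊆ t) (v : V) : outdeg a v ≤ outdeg b v := by
  classical
  by_contra! hlt
  set f : V → ℝ := fun u => outdeg a u - outdeg b u
  obtain ⟨u₀, -, hmax⟩ := exists_max_image univ f ⟨v, mem_univ v⟩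
  have hδ : 0 < f u₀ := (sub_pos.2 hlt).trans_le (hmax v (mem_univ v))
  set M := univ.filter fun u => f u₀ ≤ f u
  have hM : ∀ u, u ∈ M ↔ f u₀ ≤ f u := fun u => by simp [M]
  -- By maximality of `f u₀`, no arc leaves `M` with a surplus of `a` over `b`.
  have hclosed : ∀ u ∈ M, ∀ w ∈ Mᶜ, a u w - b u w ≤ 0 := by
    intro u hu w hw
    by_contra! hpos
    obtain ⟨hau, hbw⟩ := haf.outdeg_le_of_lt_of_add_swap_le hbf ha.1 hb.1
      (ha.add_swap_le hb hst u w) (sub_pos.1 hpos)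
    refine mem_compl.1 hw ((hM w).2 ?_)
    linarith [(hM u).1 hu]
  have hlow : #M • f u₀ ≤ ∑ u ∈ M, f u := card_nsmul_le_sum M f _ fun u hu => (hM u).1 hu
  have hup := sum_outdeg_sub_le_sum_compl a b M fun u _ w _ => ha.add_swap_le hb hst u w
  have hbdry : ∑ u ∈ M, ∑ w ∈ Mᶜ, (a u w - b u w) ≤ 0 :=
    sum_nonpos fun u hu => sum_nonpos fun w hw => hclosed u hu w hw
  have hcard : (0 : ℝ) < #M := Nat.cast_pos.2 (card_pos.2 ⟨u₀, (hM u₀).2 le_rfl⟩)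
  rw [nsmul_eq_mul] at hlow
  nlinarith

lemma mem_hopBall [Fintype V] {G : SimpleGraph V} {v u : V} {k : ℕ} :
    u ∈ hopBall G v k ↔ G.Reachable v u ∧ G.dist v u ≤ k := by
  classical
  simp [hopBall]

lemma hopBall_mono [Fintype V] {G : SimpleGraph V} {v : V} {i k : ℕ} (h : i ≤ k) :
    hopBall G v i ⊆ hopBall G v k := fun _ hu =>
  mem_hopBall.2 ⟨(mem_hopBall.1 hu).1, (mem_hopBall.1 hu).2.trans h⟩

lemma mem_hopBall_succ_of_adj [Fintype V] {G : SimpleGraph V} {v u w : V} {i : ℕ}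
    (hu : u ∈ hopBall G v i) (hadj : G.Adj u w) : w ∈ hopBall G v (i + 1) := by
  obtain ⟨hr, hd⟩ := mem_hopBall.1 hu
  obtain ⟨p, hp⟩ := hr.exists_walk_length_eq_dist
  refine mem_hopBall.2 ⟨⟨p.concat hadj⟩, ?_⟩
  have := SimpleGraph.dist_le (p.concat hadj)
  rw [SimpleGraph.Walk.length_concat, hp] at this
  omega

open Classical in
def excessReach [Fintype V] (a b : V → V → ℝ) (v : V) : ℕ → Finset V
  | 0 => {v}
  | i + 1 => excessReach a b v i ∪
      univ.filter fun w => ∃ u ∈ excessReach a b v i, a u w < b u w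

section excessReach

variable [Fintype V] {G : SimpleGraph V} {t : Finset V} {a b : V → V → ℝ} {v : V} {i k : ℕ}

lemma mem_excessReach_succ {w : V} : w ∈ excessReach a b v (i + 1) ↔
    w ∈ excessReach a b v i ∨ ∃ u ∈ excessReach a b v i, a u w < b u w := by
  simp [excessReach]

lemma excessReach_subset_succ : excessReach a b v i ⊆ excessReach a b v (i + 1) :=
  fun _ hw => mem_excessReach_succ.2 (Or.inl hw)

lemma self_mem_excessReach : ∀ i, v ∈ excessReach a b v i
  | 0 => mem_singleton_self v
  | i + 1 => excessReach_subset_succ (self_mem_excessReach i)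

lemma excessReach_subset_hopBall (ha : ∀ u w, 0 ≤ a u w) (hb : OrientationOn G t b) :
    ∀ i, excessReach a b v i ⊆ hopBall G v i
  | 0 => by simp [excessReach, mem_hopBall]
  | i + 1 => fun w hw => by
    rcases mem_excessReach_succ.1 hw with hw | ⟨u, hu, hlt⟩
    · exact hopBall_mono i.le_succ (excessReach_subset_hopBall ha hb i hw)
    · exact mem_hopBall_succ_of_adj (excessReach_subset_hopBall ha hb i hu)
        (hb.adj_of_pos ((ha u w).trans_lt hlt))

lemma outdeg_le_of_mem_excessReach (ha : OrientationOn G (hopBall G v k) a)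
    (haf : LocallyFair a) (hb : OrientationOn G t b) (hbf : LocallyFair b)
    (hst : hopBall G v k ⊆ t) :
    ∀ i ≤ k, ∀ u ∈ excessReach a b v i, outdeg a u ≤ outdeg a v ∧ outdeg b v ≤ outdeg b u
  | 0, _, u, hu => by
    rw [mem_singleton.1 hu]
    exact ⟨le_rfl, le_rfl⟩
  | i + 1, hi, w, hw => by
    have ih := outdeg_le_of_mem_excessReach ha haf hb hbf hst i (by omega)
    rcases mem_excessReach_succ.1 hw with hw | ⟨u, hu, hlt⟩
    · exact ih w hw
    have hball : excessReach a b v (i + 1) ⊆ hopBall G v k :=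
      (excessReach_subset_hopBall ha.1 hb _).trans (hopBall_mono hi)
    obtain ⟨hbu, haw⟩ := hbf.outdeg_le_of_lt_of_add_swap_le haf hb.1 ha.1
      (ha.add_swap_eq_of_mem hb hst (hball (excessReach_subset_succ hu)) (hball hw)).ge hlt
    exact ⟨haw.trans (ih u hu).1, (ih u hu).2.trans hbu⟩

/-- The surplus of `b` over `a` at `v`, spread over the whole of `excessReach a b v i`, has to
leave it through arcs into the next layer, each of which is paid for by the reverse arc of `a`. -/
lemma card_mul_outdeg_sub_le [DecidableEq V] (ha : OrientationOn G (hopBall G v k) a)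
    (haf : LocallyFair a) (hb : OrientationOn G t b) (hbf : LocallyFair b)
    (hst : hopBall G v k ⊆ t) (hi : i < k) :
    #(excessReach a b v i) * (outdeg b v - outdeg a v) ≤
      #(excessReach a b v (i + 1) \ excessReach a b v i) * outdeg a v := by
  set R := excessReach a b v i
  set D := excessReach a b v (i + 1) \ R
  have hmono := outdeg_le_of_mem_excessReach ha haf hb hbf hst
  have hball : excessReach a b v (i + 1) ⊆ hopBall G v k :=
    (excessReach_subset_hopBall ha.1 hb _).trans (hopBall_mono hi)
  have hDR : D ⊆ Rᶜ := fun w hw => mem_compl.2 (mem_sdiff.1 hw).2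
  have hleave : ∀ u ∈ R, ∑ w ∈ Rᶜ, (b u w - a u w) ≤ ∑ w ∈ D, a w u := by
    intro u hu
    have huk := hball (excessReach_subset_succ hu)
    rw [← sum_sdiff hDR]
    have hout : ∑ w ∈ Rᶜ \ D, (b u w - a u w) ≤ 0 := by
      refine sum_nonpos fun w hw => sub_nonpos.2 (not_lt.1 fun hlt => ?_)
      obtain ⟨hwR, hwD⟩ := mem_sdiff.1 hw
      exact hwD (mem_sdiff.2 ⟨mem_excessReach_succ.2 (Or.inr ⟨u, hu, hlt⟩), mem_compl.1 hwR⟩)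
    have hin : ∑ w ∈ D, (b u w - a u w) ≤ ∑ w ∈ D, a w u := sum_le_sum fun w hw => by
      have := ha.add_swap_eq_of_mem hb hst huk (hball (mem_sdiff.1 hw).1)
      linarith [hb.1 w u]
    linarith
  calc (#R : ℝ) * (outdeg b v - outdeg a v)
      ≤ ∑ u ∈ R, (outdeg b u - outdeg a u) := by
        rw [← nsmul_eq_mul]
        refine card_nsmul_le_sum _ _ _ fun u hu => ?_
        have := hmono i hi.le u hu
        linarith
    _ ≤ ∑ u ∈ R, ∑ w ∈ Rᶜ, (b u w - a u w) :=
        sum_outdeg_sub_le_sum_compl b a R fun u hu w hw =>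
          (ha.add_swap_eq_of_mem hb hst (hball (excessReach_subset_succ hu))
            (hball (excessReach_subset_succ hw))).ge
    _ ≤ ∑ u ∈ R, ∑ w ∈ D, a w u := sum_le_sum hleave
    _ = ∑ w ∈ D, ∑ u ∈ R, a w u := sum_comm
    _ ≤ ∑ w ∈ D, outdeg a w :=
        sum_le_sum fun w _ => sum_le_sum_of_subset_of_nonneg (subset_univ R)
          fun x _ _ => ha.1 w x
    _ ≤ ∑ _w ∈ D, outdeg a v :=
        sum_le_sum fun w hw => (hmono (i + 1) hi w (mem_sdiff.1 hw).1).1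
    _ = #D * outdeg a v := by rw [sum_const, nsmul_eq_mul]

lemma one_add_pow_le_card_excessReach [DecidableEq V] (ha : OrientationOn G (hopBall G v k) a)
    (haf : LocallyFair a) (hb : OrientationOn G t b) (hbf : LocallyFair b)
    (hst : hopBall G v k ⊆ t) {ε : ℝ} (hε : 0 ≤ ε) (hlt : (1 + ε) * outdeg a v < outdeg b v) :
    ∀ i ≤ k, (1 + ε) ^ i ≤ #(excessReach a b v i)
  | 0, _ => by simp [excessReach]
  | i + 1, hi => by
    have ih := one_add_pow_le_card_excessReach ha haf hb hbf hst hε hlt i (by omega)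
    have hcount := card_mul_outdeg_sub_le ha haf hb hbf hst (i := i) (by omega)
    have hcard : (#(excessReach a b v (i + 1)) : ℝ) =
        #(excessReach a b v i) + #(excessReach a b v (i + 1) \ excessReach a b v i) := by
      rw [← card_sdiff_add_card_eq_card excessReach_subset_succ, Nat.cast_add, add_comm]
    have hpos : (0 : ℝ) < #(excessReach a b v i) :=
      Nat.cast_pos.2 (card_pos.2 ⟨v, self_mem_excessReach i⟩)
    have ha0 := outdeg_nonneg ha.1 v
    have hgrow : ε * #(excessReach a b v i) ≤
        #(excessReach a b v (i + 1) \ excessReach a b v i) := by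
      rcases ha0.eq_or_lt with h0 | h0
      · rw [← h0] at hcount hlt
        nlinarith
      · nlinarith
    calc (1 + ε) ^ (i + 1) = (1 + ε) * (1 + ε) ^ i := pow_succ' _ _
      _ ≤ (1 + ε) * #(excessReach a b v i) := by gcongr
      _ ≤ _ := by rw [hcard]; linarith

end excessReach

theorem LocallyFair.outdeg_le_one_add_mul_of_hopBall [Fintype V] {G : SimpleGraph V}
    {t : Finset V} {a b : V → V → ℝ} {v : V} {k : ℕ} {ε : ℝ}
    (ha : OrientationOn G (hopBall G v k) a) (haf : LocallyFair a) (hb : OrientationOn G t b)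
    (hbf : LocallyFair b) (hst : hopBall G v k ⊆ t) (hε : 0 ≤ ε)
    (hk : (Fintype.card V : ℝ) < (1 + ε) ^ k) : outdeg b v ≤ (1 + ε) * outdeg a v := by
  classical
  by_contra! hlt
  have := one_add_pow_le_card_excessReach ha haf hb hbf hst hε hlt k le_rfl
  have : #(excessReach a b v k) ≤ Fintype.card V := card_le_univ _
  exact hk.not_ge (by linarith [(Nat.cast_le (α := ℝ)).2 this])

lemma lt_one_add_pow_of_log_sq_div_le {ε x : ℝ} {k : ℕ} (hε : 0 < ε) (hε1 : ε ≤ 1)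
    (hx : 2 ≤ x) (hk : 4 * log x ^ 2 / ε ^ 2 ≤ k) : x < (1 + ε) ^ k := by
  by_contra! h
  have hL : 0.6931471803 < log x := log_two_gt_d9.trans_le (log_le_log two_pos hx)
  have hklog : k * log (1 + ε) ≤ log x := by
    rw [← log_pow]
    exact log_le_log (by positivity) h
  have hlog : 2 * ε / 3 ≤ log (1 + ε) :=
    (div_le_div_of_nonneg_left (by positivity) (by positivity) (by linarith)).trans
      (le_log_one_add_of_nonneg hε.le)
  have hk' : 4 * log x ^ 2 ≤ k * ε ^ 2 := by rwa [div_le_iff₀ (by positivity)] at hk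
  have hkε : k * ε ≤ 3 / 2 * log x := by
    nlinarith [mul_le_mul_of_nonneg_left hlog (Nat.cast_nonneg (α := ℝ) k)]
  nlinarith [mul_le_mul_of_nonneg_left hε1 (by linarith : 0 ≤ log x),
    mul_le_mul_of_nonneg_right hkε hε.le]

/-- there is an absolute constant `C` such that for every unit-weight graph,
every `0 < ε ≤ 1` and every `k ≥ C·ε⁻²·log² n`, the local density of `v` computed inside
its `k`-hop neighbourhood is a `(1+ε)`-approximation of its local density in `G`
(local densities being out-degrees in locally fair orientations). -/
theorem local_density_is_local :
    ∃ C : ℝ, 0 < C ∧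
      ∀ (V : Type) [Fintype V] (G : SimpleGraph V) (ε : ℝ) (v : V) (k : ℕ)
        (o ok : V → V → ℝ),
        0 < ε → ε ≤ 1 → 2 ≤ Fintype.card V →
        C * (Real.log (Fintype.card V)) ^ 2 / ε ^ 2 ≤ (k : ℝ) →
        IsOrientation G (fun _ _ => 1) o → LocallyFair o →
        OrientationOn G (hopBall G v k) ok → LocallyFair ok →
        (1 + ε)⁻¹ * outdeg o v ≤ outdeg ok v ∧ outdeg ok v ≤ (1 + ε) * outdeg o v := by
  refine ⟨4, by norm_num, fun V _ G ε v k o ok hε hε1 hn hk ho hf hok hkf => ?_⟩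
  have ho := ho.orientationOn_univ
  have hpow := lt_one_add_pow_of_log_sq_div_le hε hε1 (by exact_mod_cast hn) hk
  have hle : outdeg ok v ≤ outdeg o v := hkf.outdeg_le_of_subset hf hok ho (subset_univ _) v
  have hge : outdeg o v ≤ (1 + ε) * outdeg ok v :=
    hkf.outdeg_le_one_add_mul_of_hopBall hok ho hf (subset_univ _) hε.le hpow
  refine ⟨(inv_mul_le_iff₀ (by linarith)).2 hge, ?_⟩
  nlinarith [outdeg_nonneg ho.1 v]
end
end
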